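/- Let O be a finite set of operations with machine assignment mach : O → M, processing times delay : O → ℝ with delay(x) ≥ 0, and a partial immediate-predecessor function pre. Let (f^M, f^O) and (g^M, g^O) be two DD states, and define the merged state by h^M(k) := min(f^M(k), g^M(k)) for each machine k and h^O(x) := min(f^O(x), g^O(x)) for each operation x. Then for every list X of operations, the makespan returned by CFP applied to X from the merged state (h^M, h^O) is at most the minimum of the makespans returned by CFP applied to X from (f^M, f^O) and from (g^M, g^O); that is, the merged node provides a valid lower (dual) bound on the cost of any completion through either original node. -/
import Mathlib


noncomputable section

/-- One step of the cost-from-partial (CFP) procedure: process operation `x`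
from state `st = (f^M, f^O)` of machine- and operation-completion times.
We set `s := max (f^M (mach x)) (f^O (pre x))` (the second term omitted when
`x` has no immediate predecessor) and record `s + delay x` as the new
completion time of both `x` and its machine. -/
def JSP.step {O M : Type*} [DecidableEq O] [DecidableEq M]
    (mach : O → M) (delay : O → ℝ) (pre : O → Option O)
    (st : (M → ℝ) × (O → ℝ)) (x : O) : (M → ℝ) × (O → ℝ) :=
  let s : ℝ := match pre x with
    | none => st.1 (mach x)
    | some y => max (st.1 (mach x)) (st.2 y)
  (Function.update st.1 (mach x) (s + delay x),
   Function.update st.2 x (s + delay x))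

/-- The cost-from-partial procedure (Algorithm CFP): process the list `X` of
operations left to right from the initial state `st = (f^M, f^O)`, and return
the resulting makespan, i.e. the maximum over all machines `k` of the final
machine-completion time `f^M k`. -/
def JSP.CFP {O M : Type*} [DecidableEq O] [DecidableEq M] [Fintype M] [Nonempty M]
    (mach : O → M) (delay : O → ℝ) (pre : O → Option O)
    (X : List O) (st : (M → ℝ) × (O → ℝ)) : ℝ :=
  Finset.univ.sup' Finset.univ_nonempty (X.foldl (JSP.step mach delay pre) st).1


theorem JSP.step_mono {O M : Type*} [DecidableEq O] [DecidableEq M]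
    (mach : O → M) (delay : O → ℝ) (pre : O → Option O)
    (st st' : (M → ℝ) × (O → ℝ)) (h1 : ∀ k, st.1 k ≤ st'.1 k)
    (h2 : ∀ y, st.2 y ≤ st'.2 y) (x : O) :
    (∀ k, (JSP.step mach delay pre st x).1 k ≤ (JSP.step mach delay pre st' x).1 k) ∧
    (∀ y, (JSP.step mach delay pre st x).2 y ≤ (JSP.step mach delay pre st' x).2 y) := by
  have hs : (match pre x with
      | none => st.1 (mach x)
      | some y => max (st.1 (mach x)) (st.2 y)) ≤
      (match pre x with
      | none => st'.1 (mach x)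
      | some y => max (st'.1 (mach x)) (st'.2 y)) := by
    cases pre x with
    | none => exact h1 _
    | some y => exact max_le_max (h1 _) (h2 _)
  constructor
  · intro k
    simp only [JSP.step, Function.update]
    split <;> simp_all [add_le_add_right hs]
  · intro y
    simp only [JSP.step, Function.update]
    split <;> simp_all [add_le_add_right hs]

theorem JSP.foldl_mono {O M : Type*} [DecidableEq O] [DecidableEq M]
    (mach : O → M) (delay : O → ℝ) (pre : O → Option O)
    (X : List O) :
    ∀ st st' : (M → ℝ) × (O → ℝ), (∀ k, st.1 k ≤ st'.1 k) → (∀ y, st.2 y ≤ st'.2 y) →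
    (∀ k, (X.foldl (JSP.step mach delay pre) st).1 k ≤
        (X.foldl (JSP.step mach delay pre) st').1 k) ∧
    (∀ y, (X.foldl (JSP.step mach delay pre) st).2 y ≤
        (X.foldl (JSP.step mach delay pre) st').2 y) := by
  induction X with
  | nil => exact fun st st' h1 h2 => ⟨h1, h2⟩
  | cons x xs ih =>
    intro st st' h1 h2
    obtain ⟨h1', h2'⟩ := JSP.step_mono mach delay pre st st' h1 h2 x
    exact ih _ _ h1' h2'

/-- Validity of the DD merge operation: taking componentwise minima of two
states' machine- and operation-completion vectors yields a merged state whose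
CFP makespan on any remaining list of operations is a lower (dual) bound on
the CFP makespan from either of the original states. -/
theorem JSP.CFP_merge_lower_bound {O M : Type*} [DecidableEq O] [DecidableEq M]
    [Fintype O] [Fintype M] [Nonempty M]
    (mach : O → M) (delay : O → ℝ) (pre : O → Option O)
    (hdelay : ∀ x, 0 ≤ delay x)
    (fM gM hM : M → ℝ) (fO gO hO : O → ℝ)
    (hmM : ∀ k, hM k = min (fM k) (gM k))
    (hmO : ∀ x, hO x = min (fO x) (gO x)) :
    ∀ X : List O,
      JSP.CFP mach delay pre X (hM, hO) ≤
        min (JSP.CFP mach delay pre X (fM, fO))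
            (JSP.CFP mach delay pre X (gM, gO)) := by
  intro X
  have hf := JSP.foldl_mono mach delay pre X (hM, hO) (fM, fO)
    (fun k => by simp [hmM k]) (fun y => by simp [hmO y])
  have hg := JSP.foldl_mono mach delay pre X (hM, hO) (gM, gO)
    (fun k => by simp [hmM k]) (fun y => by simp [hmO y])
  refine le_min ?_ ?_ <;>
  · apply Finset.sup'_le
    intro k _
    refine le_trans ?_ (Finset.le_sup' _ (Finset.mem_univ k))
    first | exact hf.1 k | exact hg.1 k

end
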